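/- arXiv:1406.1740 — 3 statements merged into one kernel-verified Lean document; each statement's English description precedes it below -/
import Mathlib

section
/- Fix θ ∈ (0, π/2], β ∈ (0, π/2), and b ∈ ℝ. Then the second derivative with respect to β of the function β' ↦ ϑ(λ, β', b), evaluated at β, tends to −1/(sin β)² as λ → +∞. -/
/-!
For fixed `λ`, `β' ↦ ϑ(λ, β', b)` is `y ↦ arsinh (c * sin y)` with `c = sinh (b + arsinh (sinh λ / sin θ))`,
whose second derivative is `-c (1 + c²) sin y / (1 + c² sin² y)^{3/2}`. Since `sin θ > 0`, `c → +∞` as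
`λ → +∞`, and for `sin β > 0` this expression tends to `-1 / sin² β`.
-/

/-- The function `ϑ(λ, β, b) = arsinh (sinh (b + arsinh (sinh λ / sin θ)) * sin β)`. -/
noncomputable def vartheta (θ lam β b : ℝ) : ℝ :=
  Real.arsinh (Real.sinh (b + Real.arsinh (Real.sinh lam / Real.sin θ)) * Real.sin β)

open Real Filter Topology

section ArsinhMulSin

variable (c x : ℝ)

lemma hasDerivAt_arsinh_mul_sin :
    HasDerivAt (fun y => arsinh (c * sin y)) (c * cos x / √(1 + (c * sin x) ^ 2)) x := by
  refine ((hasDerivAt_arsinh (c * sin x)).comp x ((hasDerivAt_sin x).const_mul c)).congr_deriv ?_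
  ring

lemma hasDerivAt_mul_cos_div_sqrt :
    HasDerivAt (fun y => c * cos y / √(1 + (c * sin y) ^ 2))
      (-(c * (1 + c ^ 2) * sin x) / ((1 + (c * sin x) ^ 2) * √(1 + (c * sin x) ^ 2))) x := by
  have hD : 0 < 1 + (c * sin x) ^ 2 := by positivity
  have hS : 0 < √(1 + (c * sin x) ^ 2) := sqrt_pos.2 hD
  have hsqrt := ((((hasDerivAt_sin x).const_mul c).fun_pow 2).const_add 1).sqrt hD.ne'
  refine (((hasDerivAt_cos x).const_mul c).div hsqrt hS.ne').congr_deriv ?_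
  have hSS : √(1 + (c * sin x) ^ 2) ^ 2 = 1 + (c * sin x) ^ 2 := sq_sqrt hD.le
  rw [hSS]
  generalize √(1 + (c * sin x) ^ 2) = S at hS hSS
  field_simp
  linear_combination (-2 * c * sin x) * hSS - 2 * c ^ 3 * sin x * sin_sq_add_cos_sq x

lemma iteratedDeriv_two_arsinh_mul_sin :
    iteratedDeriv 2 (fun y => arsinh (c * sin y)) x
      = -(c * (1 + c ^ 2) * sin x) / ((1 + (c * sin x) ^ 2) * √(1 + (c * sin x) ^ 2)) := by
  rw [iteratedDeriv_succ, iteratedDeriv_one,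
    funext fun y => (hasDerivAt_arsinh_mul_sin c y).deriv]
  exact (hasDerivAt_mul_cos_div_sqrt c x).deriv

end ArsinhMulSin

lemma tendsto_neg_mul_div_sqrt_atTop {s : ℝ} (hs : 0 < s) :
    Tendsto (fun c => -(c * (1 + c ^ 2) * s) / ((1 + (c * s) ^ 2) * √(1 + (c * s) ^ 2)))
      atTop (𝓝 (-1 / s ^ 2)) := by
  -- substitute `t = 1 / c ^ 2 → 0`
  let g : ℝ → ℝ := fun t => -((t + 1) * s) / ((t + s ^ 2) * √(t + s ^ 2))
  have hg : Tendsto g (𝓝 0) (𝓝 (-1 / s ^ 2)) := by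
    have hg0 : g 0 = -1 / s ^ 2 := by
      simp only [g, zero_add, sqrt_sq hs.le]
      field_simp
    rw [← hg0]
    refine ContinuousAt.tendsto (ContinuousAt.div (by fun_prop) (by fun_prop) ?_)
    simp only [zero_add, sqrt_sq hs.le]
    positivity
  refine (hg.comp (tendsto_inv_atTop_zero.comp (tendsto_pow_atTop two_ne_zero))).congr' ?_
  filter_upwards [eventually_gt_atTop 0] with c hc
  have hsum : (c ^ 2)⁻¹ + s ^ 2 = (1 + (c * s) ^ 2) / c ^ 2 := by field_simp
  simp only [Function.comp_apply, g, hsum, sqrt_div' _ (sq_nonneg c), sqrt_sq hc.le]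
  field_simp

lemma tendsto_sinh_add_arsinh_sinh_div_atTop (b : ℝ) {a : ℝ} (ha : 0 < a) :
    Tendsto (fun lam => sinh (b + arsinh (sinh lam / a))) atTop atTop :=
  sinhOrderIso.tendsto_atTop.comp <| tendsto_atTop_add_const_left _ b <|
    sinhOrderIso.symm.tendsto_atTop.comp (sinhOrderIso.tendsto_atTop.atTop_div_const ha)

/-- Fix `θ ∈ (0, π/2]`, `β ∈ (0, π/2)` and `b ∈ ℝ`. The second derivative with respect
to `β` of `β' ↦ ϑ(λ, β', b)`, evaluated at `β`, tends to `-1 / (sin β)^2` as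
`λ → +∞`. -/
theorem iteratedDeriv_two_vartheta_tendsto (θ β b : ℝ) (hθ : θ ∈ Set.Ioc 0 (Real.pi / 2))
    (hβ : β ∈ Set.Ioo 0 (Real.pi / 2)) :
    Filter.Tendsto (fun lam : ℝ => iteratedDeriv 2 (fun β' : ℝ => vartheta θ lam β' b) β)
      Filter.atTop (nhds (-1 / (Real.sin β) ^ 2)) := by
  have hsinθ : 0 < sin θ := sin_pos_of_pos_of_lt_pi hθ.1 (by linarith [hθ.2, pi_pos])
  have hsinβ : 0 < sin β := sin_pos_of_pos_of_lt_pi hβ.1 (by linarith [hβ.2, pi_pos])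
  simp only [vartheta, iteratedDeriv_two_arsinh_mul_sin]
  exact (tendsto_neg_mul_div_sqrt_atTop hsinβ).comp (tendsto_sinh_add_arsinh_sinh_div_atTop b hsinθ)
end

section
/- Fix θ ∈ (0, π/2] and real numbers B and c'. Then there exist β₁ ∈ (0, π/2) and Λ ∈ ℝ such that for every λ' ≥ Λ, every b ≤ c', and every β ∈ (0, β₁], one has arsinh( sinh(λ' + b) · sin β ) ≤ arsinh( sinh(λ') · sin θ ) + B. -/
lemma my_arsinh_le_log {x : ℝ} (hx : 0 ≤ x) : Real.arsinh x ≤ Real.log (2 * x + 1) := by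
  have hs : Real.sqrt (1 + x ^ 2) ≤ 1 + x := by
    rw [show (1 + x : ℝ) = Real.sqrt ((1 + x) ^ 2) by
      rw [Real.sqrt_sq (by linarith)]]
    exact Real.sqrt_le_sqrt (by nlinarith)
  have hpos : 0 < x + Real.sqrt (1 + x ^ 2) := by
    have := Real.sqrt_pos.mpr (show (0:ℝ) < 1 + x ^ 2 by positivity)
    linarith
  rw [Real.arsinh]
  exact Real.log_le_log hpos (by linarith)

lemma my_log_le_arsinh {x : ℝ} (hx : 0 < x) : Real.log (2 * x) ≤ Real.arsinh x := by
  have hs : x ≤ Real.sqrt (1 + x ^ 2) := by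
    have h := Real.sqrt_le_sqrt (show x ^ 2 ≤ 1 + x ^ 2 by nlinarith)
    rwa [Real.sqrt_sq hx.le] at h
  rw [Real.arsinh]
  exact Real.log_le_log (by linarith) (by linarith)

/-- Fix `θ ∈ (0, π/2]` and real numbers `B` and `c'`. Then there exist
`β₁ ∈ (0, π/2)` and `Λ ∈ ℝ` such that for every `λ' ≥ Λ`, every `b ≤ c'`, and every
`β ∈ (0, β₁]`, one has
`arsinh (sinh (λ' + b) * sin β) ≤ arsinh (sinh λ' * sin θ) + B`. -/
theorem exists_beta_one_uniform (θ B c' : ℝ) (hθ : θ ∈ Set.Ioc 0 (Real.pi / 2)) :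
    ∃ β₁ ∈ Set.Ioo 0 (Real.pi / 2), ∃ Λ : ℝ, ∀ l' ≥ Λ, ∀ b ≤ c', ∀ β ∈ Set.Ioc 0 β₁,
      Real.arsinh (Real.sinh (l' + b) * Real.sin β) ≤
        Real.arsinh (Real.sinh l' * Real.sin θ) + B := by
  obtain ⟨hθ0, hθ2⟩ := hθ
  have hsinθ : 0 < Real.sin θ :=
    Real.sin_pos_of_pos_of_lt_pi hθ0 (lt_of_le_of_lt hθ2 (by linarith [Real.pi_pos]))
  set β₁ : ℝ := min 1 (Real.exp (B - c') * Real.sin θ / 4) with hβ₁def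
  have hβ₁pos : 0 < β₁ := lt_min one_pos (by positivity)
  have hβ₁le1 : β₁ ≤ 1 := min_le_left _ _
  have hβ₁lt : β₁ < Real.pi / 2 := lt_of_le_of_lt hβ₁le1 (by
    have := Real.pi_gt_three; linarith)
  refine ⟨β₁, ⟨hβ₁pos, hβ₁lt⟩, max 1 (Real.log (4 / (Real.sin θ * Real.exp B))), ?_⟩
  intro l' hl' b hb β ⟨hβ0, hββ₁⟩
  have hl1 : (1:ℝ) ≤ l' := le_trans (le_max_left _ _) hl'
  have hexpl : 4 / (Real.sin θ * Real.exp B) ≤ Real.exp l' := by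
    calc 4 / (Real.sin θ * Real.exp B)
        = Real.exp (Real.log (4 / (Real.sin θ * Real.exp B))) := by
          rw [Real.exp_log (by positivity)]
      _ ≤ Real.exp l' := Real.exp_le_exp.mpr (le_trans (le_max_right _ _) hl')
  -- upper bound on LHS argument
  have hsinβpos : 0 < Real.sin β :=
    Real.sin_pos_of_pos_of_lt_pi hβ0 (by
      have := Real.pi_gt_three
      linarith [le_trans hββ₁ hβ₁le1])
  have hsinβle : Real.sin β ≤ β₁ := le_trans (Real.sin_le hβ0.le) hββ₁
  have hsinh_ub : Real.sinh (l' + b) ≤ Real.exp (l' + c') / 2 := by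
    have h1 : Real.sinh (l' + b) ≤ Real.sinh (l' + c') :=
      Real.sinh_le_sinh.mpr (by linarith)
    have h2 : Real.sinh (l' + c') ≤ Real.exp (l' + c') / 2 := by
      rw [Real.sinh_eq]
      have := Real.exp_pos (-(l' + c'))
      linarith
    linarith
  set M : ℝ := Real.exp (l' + c') / 2 * β₁ with hMdef
  have hM0 : 0 ≤ M := by positivity
  have hxM : Real.sinh (l' + b) * Real.sin β ≤ M := by
    calc Real.sinh (l' + b) * Real.sin β
        ≤ Real.exp (l' + c') / 2 * Real.sin β :=
          mul_le_mul_of_nonneg_right hsinh_ub hsinβpos.le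
      _ ≤ M := mul_le_mul_of_nonneg_left hsinβle (by positivity)
  -- lower bound on RHS argument
  have hsinhl : Real.exp l' / 4 ≤ Real.sinh l' := by
    rw [Real.sinh_eq]
    have ha : Real.exp (-l') ≤ 1 := Real.exp_le_one_iff.mpr (by linarith)
    have hb2 : (2:ℝ) ≤ Real.exp l' := by
      have h1 : (2:ℝ) ≤ Real.exp 1 := by nlinarith [Real.add_one_le_exp 1]
      linarith [Real.exp_le_exp.mpr hl1]
    linarith
  have hy : 0 < Real.sinh l' * Real.sin θ := by
    have : 0 < Real.sinh l' := lt_of_lt_of_le (by positivity) hsinhl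
    positivity
  -- chain
  have key : 2 * M + 1 ≤ 2 * (Real.sinh l' * Real.sin θ) * Real.exp B := by
    have hMb : 2 * M ≤ Real.exp l' * Real.sin θ * Real.exp B / 4 := by
      have hβ₁le : β₁ ≤ Real.exp (B - c') * Real.sin θ / 4 := min_le_right _ _
      have : 2 * M = Real.exp (l' + c') * β₁ := by ring
      rw [this, Real.exp_add]
      calc Real.exp l' * Real.exp c' * β₁
          ≤ Real.exp l' * Real.exp c' * (Real.exp (B - c') * Real.sin θ / 4) :=
            mul_le_mul_of_nonneg_left hβ₁le (by positivity)
        _ = Real.exp l' * Real.sin θ * Real.exp B / 4 := by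
            rw [Real.exp_sub]
            field_simp
    have h1 : 1 ≤ Real.exp l' * Real.sin θ * Real.exp B / 4 := by
      rw [le_div_iff₀ (by norm_num)]
      rw [div_le_iff₀ (show (0:ℝ) < Real.sin θ * Real.exp B by positivity)] at hexpl
      nlinarith
    have h2 : Real.exp l' * Real.sin θ * Real.exp B / 2 ≤
        2 * (Real.sinh l' * Real.sin θ) * Real.exp B := by
      have := mul_le_mul_of_nonneg_right hsinhl hsinθ.le
      nlinarith [Real.exp_pos B]
    linarith
  calc Real.arsinh (Real.sinh (l' + b) * Real.sin β)
      ≤ Real.arsinh M := Real.arsinh_le_arsinh.mpr hxM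
    _ ≤ Real.log (2 * M + 1) := my_arsinh_le_log hM0
    _ ≤ Real.log (2 * (Real.sinh l' * Real.sin θ) * Real.exp B) :=
        Real.log_le_log (by linarith) key
    _ = Real.log (2 * (Real.sinh l' * Real.sin θ)) + B := by
        rw [Real.log_mul (by positivity) (Real.exp_pos B).ne', Real.log_exp]
    _ ≤ Real.arsinh (Real.sinh l' * Real.sin θ) + B := by
        linarith [my_log_le_arsinh hy]
end

section
/- Fix r > 0 and t ≠ 0. Let s(t) ≥ 0 be the unique nonnegative real with cosh(s(t)) = cosh r · cosh t, and let β(t) = arcsin( sinh r / sinh(s(t)) ). Then sinh(s(t))² · (dβ/dt)² + (ds/dt)² = cosh(r)², where dβ/dt and ds/dt denote the derivatives of the functions t ↦ β(t) and t ↦ s(t) at t. -/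
/-! Since `s = arcosh (cosh r * cosh t)`, one gets `ds/dt = cosh r * sinh t / sinh s`, and
`cosh s = cosh r * cosh t` gives `sinh² s = sinh² r + cosh² r * sinh² t`. Hence
`cos² β = 1 - sinh² r / sinh² s = (ds/dt)²`, so differentiating `sin β = sinh r / sinh s` yields
`sinh² s * (dβ/dt)² = sinh² r * cosh² s / sinh² s`. Adding `(ds/dt)²` leaves
`cosh² r * (sinh² r * cosh² t + sinh² t) / sinh² s = cosh² r`. -/

/-- The hypotenuse `s(t, r)`: the unique nonnegative real with
`cosh (polarS t r) = cosh r * cosh t` (see `polarS_nonneg` and `cosh_polarS`). -/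
noncomputable def polarS (t r : ℝ) : ℝ :=
  Real.arsinh (Real.sqrt ((Real.cosh r * Real.cosh t) ^ 2 - 1))

theorem polarS_nonneg (t r : ℝ) : 0 ≤ polarS t r :=
  Real.arsinh_nonneg_iff.mpr (Real.sqrt_nonneg _)

theorem cosh_polarS (t r : ℝ) : Real.cosh (polarS t r) = Real.cosh r * Real.cosh t := by
  have h1 : (1 : ℝ) ≤ Real.cosh r * Real.cosh t := by
    nlinarith [Real.one_le_cosh r, Real.one_le_cosh t]
  have h2 : (0 : ℝ) ≤ (Real.cosh r * Real.cosh t) ^ 2 - 1 := by nlinarith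
  rw [polarS, Real.cosh_arsinh, Real.sq_sqrt h2]
  rw [show (1 : ℝ) + ((Real.cosh r * Real.cosh t) ^ 2 - 1)
      = (Real.cosh r * Real.cosh t) ^ 2 by ring]
  exact Real.sqrt_sq (by linarith)

/-- The angle `β(t, r) = arcsin (sinh r / sinh (s(t, r)))`. -/
noncomputable def polarBeta (t r : ℝ) : ℝ :=
  Real.arcsin (Real.sinh r / Real.sinh (polarS t r))

open Real

section

variable {r t : ℝ}

theorem polarS_eq_arcosh (t r : ℝ) : polarS t r = arcosh (cosh r * cosh t) := by
  rw [← cosh_polarS, arcosh_cosh (polarS_nonneg t r)]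

theorem one_lt_cosh_mul_cosh (ht : t ≠ 0) : 1 < cosh r * cosh t :=
  one_lt_mul_of_le_of_lt (one_le_cosh r) (one_lt_cosh.mpr ht)

theorem sinh_polarS_pos (ht : t ≠ 0) : 0 < sinh (polarS t r) := by
  rw [sinh_pos_iff, polarS_eq_arcosh]
  exact arcosh_pos (one_lt_cosh_mul_cosh ht)

theorem sinh_polarS_sq (t r : ℝ) :
    sinh (polarS t r) ^ 2 = sinh r ^ 2 + (cosh r * sinh t) ^ 2 := by
  linear_combination (cosh_sq (polarS t r)).symm + congrArg (· ^ 2) (cosh_polarS t r)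
    + cosh r ^ 2 * cosh_sq t + cosh_sq r

theorem hasDerivAt_polarS (ht : t ≠ 0) :
    HasDerivAt (polarS · r) (cosh r * sinh t / sinh (polarS t r)) t := by
  have hx := one_lt_cosh_mul_cosh (r := r) ht
  have h := (hasDerivAt_arcosh hx).comp t ((hasDerivAt_cosh t).const_mul (cosh r))
  rw [← sinh_arcosh hx.le, ← polarS_eq_arcosh] at h
  rw [show (polarS · r) = arcosh ∘ (cosh r * cosh ·) from funext (polarS_eq_arcosh · r)]
  exact h.congr_deriv (by ring)

theorem one_sub_sq_sinh_div_sinh_polarS (ht : t ≠ 0) :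
    1 - (sinh r / sinh (polarS t r)) ^ 2 = (cosh r * sinh t / sinh (polarS t r)) ^ 2 := by
  have hS := (sinh_polarS_pos (r := r) ht).ne'
  field_simp
  linear_combination sinh_polarS_sq t r

theorem hasDerivAt_polarBeta (ht : t ≠ 0) :
    HasDerivAt (polarBeta · r)
      (-(sinh r * cosh (polarS t r) * (cosh r * sinh t / sinh (polarS t r))) /
        (sinh (polarS t r) ^ 2 * |cosh r * sinh t / sinh (polarS t r)|)) t := by
  have hS := sinh_polarS_pos (r := r) ht
  have hx : (sinh r / sinh (polarS t r)) ^ 2 < 1 := by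
    have : 0 < (cosh r * sinh t / sinh (polarS t r)) ^ 2 := by
      have hsinh_t := sinh_ne_zero.mpr ht
      positivity
    linarith [one_sub_sq_sinh_div_sinh_polarS (r := r) ht]
  have hx_abs := abs_lt.mp (sq_lt_one_iff_abs_lt_one _ |>.mp hx)
  have h := (hasDerivAt_arcsin hx_abs.1.ne' hx_abs.2.ne).comp t
    ((hasDerivAt_const t (sinh r)).div ((hasDerivAt_sinh _).comp t (hasDerivAt_polarS ht)) hS.ne')
  rw [one_sub_sq_sinh_div_sinh_polarS ht, sqrt_sq_eq_abs] at h
  exact h.congr_deriv (by simp only [Function.comp_apply]; field_simp; ring)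

end

theorem fermi_polar_t_component_general (r t : ℝ) (ht : t ≠ 0) :
    Real.sinh (polarS t r) ^ 2 * (deriv (fun t' : ℝ => polarBeta t' r) t) ^ 2
        + (deriv (fun t' : ℝ => polarS t' r) t) ^ 2
      = Real.cosh r ^ 2 := by
  rw [(hasDerivAt_polarBeta ht).deriv, (hasDerivAt_polarS ht).deriv, div_pow, mul_pow, sq_abs]
  have hS := (sinh_polarS_pos (r := r) ht).ne'
  have hsinh_t := sinh_ne_zero.mpr ht
  field_simp
  linear_combination sinh r ^ 2 * (cosh (polarS t r) + cosh r * cosh t) * cosh_polarS t r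
    - cosh r ^ 2 * sinh_polarS_sq t r + cosh r ^ 2 * sinh r ^ 2 * cosh_sq t
    - cosh r ^ 2 * sinh t ^ 2 * cosh_sq r

/-- Fix `r > 0` and `t ≠ 0`. With `s(t') = polarS t' r` and
`β(t') = arcsin (sinh r / sinh (s(t')))`, one has
`sinh (s t)² * (dβ/dt)² + (ds/dt)² = cosh(r)²`. -/
theorem fermi_polar_t_component (r t : ℝ) (hr : 0 < r) (ht : t ≠ 0) :
    Real.sinh (polarS t r) ^ 2 * (deriv (fun t' : ℝ => polarBeta t' r) t) ^ 2
        + (deriv (fun t' : ℝ => polarS t' r) t) ^ 2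
      = Real.cosh r ^ 2 :=
  fermi_polar_t_component_general r t ht
end
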